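/- arXiv:1409.4683 — 2 statements merged into one kernel-verified Lean document; each statement's English description precedes it below -/
import Mathlib

section
/- (Scaled axis-parallel multilinear Kakeya) Let n ≥ 2, W > 0, and suppose l_{j,a} are lines in ℝ^n, for j = 1, ..., n and a = 1, ..., N_j, such that each line l_{j,a} is exactly parallel to the x_j-axis. Then ∫_{ℝ^n} ∏_{j=1}^n ( Σ_{a=1}^{N_j} T_{j,a,W} )^{1/(n-1)} ≤ ω_{n-1}^{n/(n-1)} W^n ∏_{j=1}^n N_j^{1/(n-1)}, where T_{j,a,W} is the characteristic function of the W-neighborhood of l_{j,a} and ω_{n-1} is the Lebesgue measure of the unit ball in ℝ^{n-1}. -/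
/-!
The `W`-neighbourhood of a line parallel to `e_j` is a cylinder over an `(n-1)`-ball of radius `W`,
so `f_j = ∑_a T_{j,a,W}` does not depend on `x_j`, and its integral over the other `n - 1`
coordinates is `N_j ω_{n-1} W^{n-1}`. For functions `f_j` independent of `x_j` the
Loomis–Whitney inequality `∫ ∏_j f_j^{1/(n-1)} ≤ ∏_j (∫ f_j dx̂_j)^{1/(n-1)}` holds: integrate
one coordinate `x_k` at a time; the `k`-th factor is constant in `x_k`, and Hölder's inequality
with `n - 1` exponents `1/(n-1)` handles the others. The right-hand side is then the stated bound.
-/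

open MeasureTheory Finset
open scoped ENNReal

noncomputable section

/-- The line in `ℝⁿ` through `p` with direction `v`. -/
def line {n : ℕ} (p v : EuclideanSpace ℝ (Fin n)) : Set (EuclideanSpace ℝ (Fin n)) :=
  {x | ∃ t : ℝ, x = p + t • v}

/-- `ℝ≥0∞`-valued characteristic function of the `W`-neighborhood of the set `A`:
the indicator of `{x : dist(x, A) ≤ W}`. -/
def tubeFn {n : ℕ} (A : Set (EuclideanSpace ℝ (Fin n))) (W : ℝ)
    (x : EuclideanSpace ℝ (Fin n)) : ℝ≥0∞ :=
  Set.indicator {y | Metric.infDist y A ≤ W} 1 x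

/-- Axis-parallel cube with corner `c` and side length `S`. -/
def cube {n : ℕ} (c : EuclideanSpace ℝ (Fin n)) (S : ℝ) : Set (EuclideanSpace ℝ (Fin n)) :=
  {x | ∀ i, x i ∈ Set.Icc (c i) (c i + S)}

/-- The projection `ℝⁿ → ℝ^{n-1}` forgetting the `j`-th coordinate. -/
def proj {n : ℕ} (j : Fin n) (x : EuclideanSpace ℝ (Fin n)) :
    EuclideanSpace ℝ (Fin (n - 1)) :=
  WithLp.toLp 2 (fun i : Fin (n - 1) =>
    if (i : ℕ) < (j : ℕ) then x ⟨i, by omega⟩ else x ⟨i + 1, by omega⟩)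

/-- The graph of `g : ℝ → ℝ^{n-1}` over the `x_j`-axis. -/
def lipGraph {n : ℕ} (j : Fin n) (g : ℝ → EuclideanSpace ℝ (Fin (n - 1))) :
    Set (EuclideanSpace ℝ (Fin n)) :=
  {x | proj j x = g (x j)}

open Metric

theorem dist_add_smul_single_sq {ι : Type*} [Fintype ι] [DecidableEq ι]
    (x c : EuclideanSpace ℝ ι) (j : ι) (t : ℝ) :
    dist x (c + t • EuclideanSpace.single j 1) ^ 2
      = (x j - c j - t) ^ 2 + ∑ i ∈ univ.erase j, (x i - c i) ^ 2 := by
  rw [EuclideanSpace.dist_eq, Real.sq_sqrt (by positivity), ← add_sum_erase _ _ (mem_univ j)]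
  congr 1
  · simp only [PiLp.add_apply, PiLp.smul_apply, PiLp.single_eq_same, smul_eq_mul, mul_one,
      Real.dist_eq, sq_abs]
    ring
  · refine sum_congr rfl fun i hi => ?_
    simp [Real.dist_eq, sq_abs, ne_of_mem_erase hi]

theorem infDist_line_single {n : ℕ} (x c : EuclideanSpace ℝ (Fin n)) (j : Fin n) :
    infDist x (line c (EuclideanSpace.single j 1)) = √(∑ i ∈ univ.erase j, (x i - c i) ^ 2) := by
  have hdist (t : ℝ) : dist x (c + t • EuclideanSpace.single j 1)
      = √((x j - c j - t) ^ 2 + ∑ i ∈ univ.erase j, (x i - c i) ^ 2) := by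
    rw [← dist_add_smul_single_sq, Real.sqrt_sq dist_nonneg]
  apply le_antisymm
  · calc infDist x (line c (EuclideanSpace.single j 1))
        ≤ dist x (c + (x j - c j) • EuclideanSpace.single j 1) :=
          infDist_le_dist_of_mem (by exact ⟨x j - c j, rfl⟩)
      _ = _ := by rw [hdist]; simp
  · have hne : (line c (EuclideanSpace.single j 1)).Nonempty := ⟨c, 0, by simp⟩
    refine not_lt.1 fun h => ?_
    obtain ⟨_, ⟨t, rfl⟩, ht⟩ := (infDist_lt_iff hne).1 h
    rw [hdist] at ht
    exact (Real.sqrt_le_sqrt (le_add_of_nonneg_left (sq_nonneg _))).not_gt ht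

/-- The closed `W`-neighbourhood of the line through `c` parallel to the `j`-th axis. -/
def axisTube {ι : Type*} [Fintype ι] [DecidableEq ι] (j : ι) (c : ι → ℝ) (W : ℝ) : Set (ι → ℝ) :=
  {u | ∑ i ∈ univ.erase j, (u i - c i) ^ 2 ≤ W ^ 2}

theorem tubeFn_line_single {n : ℕ} {W : ℝ} (j : Fin n) (c x : EuclideanSpace ℝ (Fin n))
    (hW : 0 ≤ W) :
    tubeFn (line c (EuclideanSpace.single j 1)) W x = (axisTube j c W).indicator 1 x := by
  simp only [tubeFn, axisTube, Set.indicator_apply, Set.mem_ofPred_eq, infDist_line_single,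
    Real.sqrt_le_left hW, Pi.one_apply]

theorem volume_setOf_sum_sq_sub_le {κ : Type*} [Fintype κ] (c : κ → ℝ) {W : ℝ} (hW : 0 ≤ W) :
    volume {v : κ → ℝ | ∑ i, (v i - c i) ^ 2 ≤ W ^ 2}
      = ENNReal.ofReal (W ^ Fintype.card κ) *
          volume (ball (0 : EuclideanSpace ℝ (Fin (Fintype.card κ))) 1) := by
  have hball : {v : κ → ℝ | ∑ i, (v i - c i) ^ 2 ≤ W ^ 2}
      = WithLp.toLp 2 ⁻¹' closedBall (WithLp.toLp 2 c : EuclideanSpace ℝ κ) W := by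
    ext v
    simp [EuclideanSpace.dist_eq, Real.sqrt_le_left hW, Real.dist_eq, sq_abs]
  have hiso := (LinearIsometryEquiv.piLpCongrLeft 2 ℝ ℝ (Fintype.equivFin κ)).measurePreserving
  rw [hball,
    (PiLp.volume_preserving_toLp κ).measure_preimage measurableSet_closedBall.nullMeasurableSet,
    Measure.addHaar_closedBall _ _ hW, finrank_euclideanSpace,
    ← hiso.measure_preimage measurableSet_ball.nullMeasurableSet]
  congr
  ext v
  simp

theorem lmarginal_finset_sum {δ α : Type*} [DecidableEq δ] {X : δ → Type*}
    [∀ i, MeasurableSpace (X i)] (μ : ∀ i, Measure (X i)) (s : Finset δ) (t : Finset α)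
    {f : α → (∀ i, X i) → ℝ≥0∞} (hf : ∀ a ∈ t, Measurable (f a)) :
    ∫⋯∫⁻_s, (fun x => ∑ a ∈ t, f a x) ∂μ = ∑ a ∈ t, ∫⋯∫⁻_s, f a ∂μ := by
  ext x
  rw [Finset.sum_apply]
  exact lintegral_finsetSum _ fun a ha => (hf a ha).comp measurable_updateFinset

section axisTube

variable {ι : Type*} [Fintype ι] [DecidableEq ι] (j : ι) (c : ι → ℝ) (W : ℝ)

theorem measurableSet_axisTube : MeasurableSet (axisTube j c W) :=
  measurableSet_le (by fun_prop) measurable_const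

theorem update_mem_axisTube_iff (u : ι → ℝ) (y : ℝ) :
    Function.update u j y ∈ axisTube j c W ↔ u ∈ axisTube j c W := by
  simp only [axisTube, Set.mem_ofPred_eq]
  rw [sum_congr rfl fun i hi => by rw [Function.update_of_ne (ne_of_mem_erase hi)]]

theorem lmarginal_erase_indicator_axisTube (hW : 0 ≤ W) (x : ι → ℝ) :
    (∫⋯∫⁻_(univ.erase j), (axisTube j c W).indicator 1 ∂fun _ => volume) x
      = ENNReal.ofReal (W ^ (Fintype.card ι - 1)) *
          volume (ball (0 : EuclideanSpace ℝ (Fin (Fintype.card ι - 1))) 1) := by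
  have hcard : Fintype.card (univ.erase j) = Fintype.card ι - 1 := by simp
  have hslice : ∀ y : univ.erase j → ℝ,
      Function.updateFinset x _ y ∈ axisTube j c W ↔ ∑ i, (y i - c i) ^ 2 ≤ W ^ 2 := by
    intro y
    simp only [axisTube, Set.mem_ofPred_eq]
    rw [← sum_coe_sort]
    simp [Function.updateFinset_def]
  calc (∫⋯∫⁻_(univ.erase j), (axisTube j c W).indicator 1 ∂fun _ => volume) x
      = ∫⁻ y : univ.erase j → ℝ,
          {y | ∑ i : univ.erase j, (y i - c i) ^ 2 ≤ W ^ 2}.indicator 1 y := by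
        rw [lmarginal, ← volume_pi]
        congr 1 with y
        simp only [Set.indicator, hslice, Set.mem_ofPred_eq, Pi.one_apply]
    _ = _ := by
        rw [lintegral_indicator_one (measurableSet_le (by fun_prop) measurable_const),
          volume_setOf_sum_sq_sub_le _ hW, hcard]

theorem lmarginal_erase_sum_indicator_axisTube {α : Type*} (t : Finset α) (c : α → ι → ℝ)
    (hW : 0 ≤ W) (x : ι → ℝ) :
    (∫⋯∫⁻_(univ.erase j), (fun u => ∑ a ∈ t, (axisTube j (c a) W).indicator 1 u)
        ∂fun _ => volume) x
      = t.card * (ENNReal.ofReal (W ^ (Fintype.card ι - 1)) *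
          volume (ball (0 : EuclideanSpace ℝ (Fin (Fintype.card ι - 1))) 1)) := by
  rw [lmarginal_finset_sum _ _ _ (f := fun a => (axisTube j (c a) W).indicator 1) fun a _ =>
      measurable_one.indicator (measurableSet_axisTube j (c a) W),
    Finset.sum_apply, sum_congr rfl fun a _ => lmarginal_erase_indicator_axisTube j (c a) W hW x,
    sum_const, nsmul_eq_mul]

end axisTube

section LoomisWhitney

variable {ι : Type*} [Fintype ι] [DecidableEq ι] {p : ℝ}

theorem lintegral_prod_erase_rpow_le {α : Type*} [MeasurableSpace α] {μ : Measure α}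
    (hp₀ : 0 ≤ p) (hp : ((Fintype.card ι : ℝ) - 1) * p = 1) (k : ι)
    {g : ι → α → ℝ≥0∞} (hg : ∀ i, AEMeasurable (g i) μ) :
    ∫⁻ a, ∏ i ∈ univ.erase k, g i a ^ p ∂μ ≤ ∏ i ∈ univ.erase k, (∫⁻ a, g i a ∂μ) ^ p := by
  refine ENNReal.lintegral_prod_norm_pow_le _ (fun i _ => hg i) ?_ fun _ _ => hp₀
  rw [sum_const, card_erase_of_mem (mem_univ k), card_univ, nsmul_eq_mul,
    Nat.cast_pred (Fintype.card_pos_iff.2 ⟨k⟩), hp]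

variable {A : ι → Type*} [∀ i, MeasurableSpace (A i)] (μ : ∀ i, Measure (A i))
  [∀ i, SigmaFinite (μ i)] {f : ι → (∀ i, A i) → ℝ≥0∞}

theorem lmarginal_prod_rpow_le_prod_lmarginal_erase (hp₀ : 0 ≤ p)
    (hp : ((Fintype.card ι : ℝ) - 1) * p = 1) (hf : ∀ i, Measurable (f i))
    (hf_update : ∀ i z y, f i (Function.update z i y) = f i z) (s : Finset ι) (x : ∀ i, A i) :
    (∫⋯∫⁻_s, (fun z => ∏ i, f i z ^ p) ∂μ) x ≤ ∏ i, (∫⋯∫⁻_(s.erase i), f i ∂μ) x ^ p := by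
  induction s using Finset.induction generalizing x with
  | empty => simp
  | @insert k s hk ih =>
    set G : ι → (∀ i, A i) → ℝ≥0∞ := fun i => ∫⋯∫⁻_(s.erase i), f i ∂μ
    have hG : ∀ i, Measurable fun y => G i (Function.update x k y) := fun i =>
      ((hf i).lmarginal μ).comp (measurable_update x)
    have hG_k : ∀ y, G k (Function.update x k y) = (∫⋯∫⁻_s, f k ∂μ) x := fun y => by
      simp only [G, erase_eq_of_notMem hk, lmarginal_update_of_notMem (hf k) hk, Function.comp_def,
        hf_update]
    have hG_erase : ∀ i ∈ univ.erase k,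
        ∫⁻ y, G i (Function.update x k y) ∂μ k = (∫⋯∫⁻_((insert k s).erase i), f i ∂μ) x :=
      fun i hi => by
        rw [erase_insert_of_ne (ne_of_mem_erase hi).symm,
          lmarginal_insert _ (hf i) fun h => hk (mem_of_mem_erase h)]
    rw [lmarginal_insert _ (measurable_prod _ fun i _ => (hf i).pow_const p) hk,
      ← mul_prod_erase univ _ (mem_univ k), erase_insert hk]
    -- the `k`-th factor is constant in `y`; Hölder applies to the other `#ι - 1` factors
    calc ∫⁻ y, (∫⋯∫⁻_s, (fun z => ∏ i, f i z ^ p) ∂μ) (Function.update x k y) ∂μ k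
        ≤ ∫⁻ y, ∏ i, G i (Function.update x k y) ^ p ∂μ k := lintegral_mono fun y => ih _
      _ = (∫⋯∫⁻_s, f k ∂μ) x ^ p *
            ∫⁻ y, ∏ i ∈ univ.erase k, G i (Function.update x k y) ^ p ∂μ k := by
        simp_rw [← mul_prod_erase univ _ (mem_univ k), hG_k]
        exact lintegral_const_mul _ (measurable_prod _ fun i _ => (hG i).pow_const p)
      _ ≤ (∫⋯∫⁻_s, f k ∂μ) x ^ p *
            ∏ i ∈ univ.erase k, (∫⁻ y, G i (Function.update x k y) ∂μ k) ^ p := by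
        gcongr
        exact lintegral_prod_erase_rpow_le hp₀ hp k fun i => (hG i).aemeasurable
      _ = _ := by rw [prod_congr rfl fun i hi => by rw [hG_erase i hi]]

theorem lintegral_prod_rpow_le_prod_lmarginal_erase (hp₀ : 0 ≤ p)
    (hp : ((Fintype.card ι : ℝ) - 1) * p = 1) (hf : ∀ i, Measurable (f i))
    (hf_update : ∀ i z y, f i (Function.update z i y) = f i z) (x : ∀ i, A i) :
    ∫⁻ z, ∏ i, f i z ^ p ∂Measure.pi μ ≤ ∏ i, (∫⋯∫⁻_(univ.erase i), f i ∂μ) x ^ p := by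
  rw [lintegral_eq_lmarginal_univ x]
  exact lmarginal_prod_rpow_le_prod_lmarginal_erase μ hp₀ hp hf hf_update univ x

end LoomisWhitney

theorem ofReal_pow_pred_mul_rpow {n : ℕ} (hn : 2 ≤ n) {W : ℝ} (hW : 0 ≤ W) (ω : ℝ≥0∞) :
    (ENNReal.ofReal (W ^ (n - 1)) * ω) ^ ((n : ℝ) / ((n : ℝ) - 1))
      = ω ^ ((n : ℝ) / ((n : ℝ) - 1)) * ENNReal.ofReal (W ^ n) := by
  have hn1 : 0 < (n : ℝ) - 1 := by
    have : (2 : ℝ) ≤ n := by exact_mod_cast hn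
    linarith
  rw [ENNReal.mul_rpow_of_nonneg _ _ (by positivity), mul_comm, ENNReal.ofReal_pow hW,
    ENNReal.ofReal_pow hW, ← ENNReal.rpow_natCast, ← ENNReal.rpow_mul, Nat.cast_pred (by omega),
    mul_div_cancel₀ _ hn1.ne', ENNReal.rpow_natCast]

theorem prod_natCast_mul_rpow {n : ℕ} (hn : 2 ≤ n) {W : ℝ} (hW : 0 ≤ W) (ω : ℝ≥0∞)
    (N : Fin n → ℕ) :
    ∏ j, ((N j : ℝ≥0∞) * (ENNReal.ofReal (W ^ (n - 1)) * ω)) ^ ((1 : ℝ) / ((n : ℝ) - 1))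
      = ω ^ ((n : ℝ) / ((n : ℝ) - 1)) * ENNReal.ofReal (W ^ n) *
          ∏ j, (N j : ℝ≥0∞) ^ ((1 : ℝ) / ((n : ℝ) - 1)) := by
  have hq : (0 : ℝ) ≤ 1 / ((n : ℝ) - 1) := by
    have : (2 : ℝ) ≤ n := by exact_mod_cast hn
    exact one_div_nonneg.2 (by linarith)
  rw [prod_congr rfl fun j _ => ENNReal.mul_rpow_of_nonneg _ _ hq, prod_mul_distrib, prod_const,
    card_univ, Fintype.card_fin, ← ENNReal.rpow_natCast, ← ENNReal.rpow_mul, one_div_mul_eq_div,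
    ofReal_pow_pred_mul_rpow hn hW, mul_comm]

/-- Scaled axis-parallel multilinear Kakeya: for tubes of radius `W > 0` around lines
exactly parallel to the axes,
`∫_{ℝⁿ} ∏_j (∑_a T_{j,a,W})^{1/(n-1)} ≤ ω_{n-1}^{n/(n-1)} Wⁿ ∏_j N_j^{1/(n-1)}`. -/
theorem axis_parallel_kakeya_scaled (n : ℕ) (hn : 2 ≤ n) (W : ℝ) (hW : 0 < W)
    (N : Fin n → ℕ) (p : (j : Fin n) → Fin (N j) → EuclideanSpace ℝ (Fin n)) :
    ∫⁻ x : EuclideanSpace ℝ (Fin n),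
        ∏ j : Fin n, (∑ a : Fin (N j),
          tubeFn (line (p j a) (EuclideanSpace.single j 1)) W x) ^ ((1 : ℝ) / ((n : ℝ) - 1))
      ≤ (volume (Metric.ball (0 : EuclideanSpace ℝ (Fin (n - 1))) 1)) ^
            ((n : ℝ) / ((n : ℝ) - 1)) * ENNReal.ofReal (W ^ n) *
          ∏ j : Fin n, (N j : ℝ≥0∞) ^ ((1 : ℝ) / ((n : ℝ) - 1)) := by
  classical
  set q : ℝ := 1 / ((n : ℝ) - 1)
  have hn1 : 0 < (n : ℝ) - 1 := by
    have : (2 : ℝ) ≤ n := by exact_mod_cast hn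
    linarith
  have hq : ((Fintype.card (Fin n) : ℝ) - 1) * q = 1 := by
    rw [Fintype.card_fin, mul_one_div_cancel hn1.ne']
  let F : Fin n → (Fin n → ℝ) → ℝ≥0∞ := fun j u => ∑ a, (axisTube j (p j a) W).indicator 1 u
  have hF : ∀ j, Measurable (F j) := fun j => Finset.measurable_sum _ fun a _ =>
    measurable_const.indicator (measurableSet_axisTube _ _ _)
  have hF_update : ∀ j z y, F j (Function.update z j y) = F j z := fun j z y => by
    simp only [F, Set.indicator_apply, update_mem_axisTube_iff, Pi.one_apply]
  have hF_marg : ∀ j, (∫⋯∫⁻_(univ.erase j), F j ∂fun _ => volume) 0 = N j *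
      (ENNReal.ofReal (W ^ (n - 1)) * volume (ball (0 : EuclideanSpace ℝ (Fin (n - 1))) 1)) :=
    fun j => by
      rw [lmarginal_erase_sum_indicator_axisTube _ _ _ _ hW.le, card_univ, Fintype.card_fin,
        Fintype.card_fin]
  calc ∫⁻ x : EuclideanSpace ℝ (Fin n), ∏ j, (∑ a : Fin (N j),
          tubeFn (line (p j a) (EuclideanSpace.single j 1)) W x) ^ q
      = ∫⁻ u, ∏ j, F j u ^ q ∂Measure.pi fun _ => volume := by
        simp only [tubeFn_line_single _ _ _ hW.le, ← volume_pi]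
        exact (PiLp.volume_preserving_ofLp (Fin n)).lintegral_comp_emb
          (MeasurableEquiv.toLp 2 (Fin n → ℝ)).symm.measurableEmbedding fun u => ∏ j, F j u ^ q
    _ ≤ ∏ j, (∫⋯∫⁻_(univ.erase j), F j ∂fun _ => volume) 0 ^ q :=
        lintegral_prod_rpow_le_prod_lmarginal_erase _ (by positivity) hq hF hF_update 0
    _ = _ := by simp_rw [hF_marg]; exact prod_natCast_mul_rpow hn hW.le _ N
end
end

section
/- (Main scale-step lemma) For every n ≥ 2 there is a constant C_n depending only on n such that the following holds. Let 0 < δ ≤ 1/2, W > 0, and suppose l_{j,a} are lines in ℝ^n, for j = 1, ..., n and a = 1, ..., N_j, each making an angle of at most δ with the x_j-axis. Let T_{j,a,W} be the characteristic function of the W-neighborhood of l_{j,a} and set f_{j,W} = Σ_{a=1}^{N_j} T_{j,a,W}. If S ≥ δ^{-1} W and Q_S is any axis-parallel cube of side length S, then ∫_{Q_S} ∏_{j=1}^n f_{j,W}^{1/(n-1)} ≤ C_n δ^n ∫_{Q_S} ∏_{j=1}^n f_{j,δ^{-1}W}^{1/(n-1)}. -/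
/-!
Cut `Q_S` into subcubes `Q` of side `L ≈ δ⁻¹W / n`. A `W`-tube in a direction within `δ` of
`e_j` meets `Q` inside a slab of width `O(W)` in every coordinate other than `x_j`, so the
Loomis–Whitney inequality bounds the integral over `Q` at scale `W` by
`O(W)ⁿ ∏_j M_j^{1/(n-1)}`, where `M_j` counts the tubes of the `j`-th family that meet `Q`.
Each of these tubes, fattened to width `δ⁻¹W`, contains all of `Q`, so the integral over `Q` at
scale `δ⁻¹W` is at least `Lⁿ ∏_j M_j^{1/(n-1)}`. The ratio is `O(W / L)ⁿ = O(nδ)ⁿ`.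
-/

open MeasureTheory Finset
open scoped ENNReal

noncomputable section

open Function

section LoomisWhitney

variable {ι : Type*} [DecidableEq ι] {X : ι → Type*} [∀ i, MeasurableSpace (X i)]
  {μ : ∀ i, Measure (X i)}

theorem lmarginal_finsetSum {α : Type*} (A : Finset α) {F : α → (∀ i, X i) → ℝ≥0∞}
    (hF : ∀ a, Measurable (F a)) (s : Finset ι) (x : ∀ i, X i) :
    (∫⋯∫⁻_s, (fun y => ∑ a ∈ A, F a y) ∂μ) x = ∑ a ∈ A, (∫⋯∫⁻_s, F a ∂μ) x :=
  lintegral_finsetSum _ fun a _ => (hF a).comp measurable_updateFinset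

variable [∀ i, SigmaFinite (μ i)]

theorem lmarginal_prod_indicator {B : ∀ i, Set (X i)} (hB : ∀ i, MeasurableSet (B i))
    (s : Finset ι) (x : ∀ i, X i) :
    (∫⋯∫⁻_s, (fun y => ∏ i ∈ s, (B i).indicator 1 (y i)) ∂μ) x = ∏ i ∈ s, μ i (B i) := by
  have hpi : ∀ y : ∀ i : s, X i, ∏ i ∈ s, (B i).indicator (1 : X i → ℝ≥0∞) (updateFinset x s y i)
      = (Set.univ.pi fun i : s => B i).indicator 1 y := by
    intro y
    rw [← Finset.coe_univ, Set.indicator_pi_one_apply, ← Finset.prod_coe_sort]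
    simp [updateFinset]
  simp only [lmarginal, hpi]
  rw [lintegral_indicator_one (MeasurableSet.univ_pi fun i : s => hB i), Measure.pi_pi,
    Finset.prod_coe_sort s (fun i => μ i (B i))]

variable [Fintype ι]

theorem lmarginal_prod_rpow_le {p : ℝ} (hp : 0 ≤ p) (hp1 : ((Fintype.card ι : ℝ) - 1) * p = 1)
    {g : ι → (∀ i, X i) → ℝ≥0∞} (hg : ∀ j, Measurable (g j))
    (hg_indep : ∀ j x t, g j (update x j t) = g j x) (s : Finset ι) (x : ∀ i, X i) :
    (∫⋯∫⁻_s, (fun y => ∏ j, g j y ^ p) ∂μ) x ≤ ∏ j, ((∫⋯∫⁻_(s.erase j), g j ∂μ) x) ^ p := by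
  induction s using Finset.induction generalizing x with
  | empty => simp
  | insert i s hi ih =>
    have hF : Measurable fun y => ∏ j, g j y ^ p :=
      Finset.measurable_prod _ fun j _ => (hg j).pow_const p
    have hG : ∀ j, Measurable fun t => (∫⋯∫⁻_(s.erase j), g j ∂μ) (update x i t) :=
      fun j => ((hg j).lmarginal μ).comp (measurable_update x)
    have hgi_const : ∀ t, (∫⋯∫⁻_(s.erase i), g i ∂μ) (update x i t)
        = (∫⋯∫⁻_((insert i s).erase i), g i ∂μ) x := fun t => by
      rw [erase_insert hi, erase_eq_of_notMem hi, lmarginal_update_of_notMem (hg i) hi]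
      congr 1
      exact funext fun y => hg_indep i y t
    have hexp : ∑ _j ∈ univ.erase i, p = 1 := by
      rw [sum_const, card_erase_of_mem (mem_univ i), card_univ, nsmul_eq_mul,
        Nat.cast_pred (Fintype.card_pos_iff.2 ⟨i⟩), hp1]
    calc (∫⋯∫⁻_insert i s, (fun y => ∏ j, g j y ^ p) ∂μ) x
        = ∫⁻ t, (∫⋯∫⁻_s, (fun y => ∏ j, g j y ^ p) ∂μ) (update x i t) ∂μ i :=
          by rw [lmarginal_insert _ hF hi]
      _ ≤ ∫⁻ t, ((∫⋯∫⁻_((insert i s).erase i), g i ∂μ) x) ^ p *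
            ∏ j ∈ univ.erase i, ((∫⋯∫⁻_(s.erase j), g j ∂μ) (update x i t)) ^ p ∂μ i := by
          refine lintegral_mono fun t => (ih _).trans_eq ?_
          rw [← mul_prod_erase _ _ (mem_univ i), hgi_const]
      _ = ((∫⋯∫⁻_((insert i s).erase i), g i ∂μ) x) ^ p *
            ∫⁻ t, ∏ j ∈ univ.erase i, ((∫⋯∫⁻_(s.erase j), g j ∂μ) (update x i t)) ^ p ∂μ i :=
          lintegral_const_mul _ (Finset.measurable_prod _ fun j _ => (hG j).pow_const p)
      _ ≤ ((∫⋯∫⁻_((insert i s).erase i), g i ∂μ) x) ^ p *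
            ∏ j ∈ univ.erase i, (∫⁻ t, (∫⋯∫⁻_(s.erase j), g j ∂μ) (update x i t) ∂μ i) ^ p := by
          gcongr
          -- Hölder for the `card ι - 1` factors that still depend on the `i`-th coordinate
          exact ENNReal.lintegral_prod_norm_pow_le _ (fun j _ => (hG j).aemeasurable) hexp
            fun _ _ => hp
      _ = ∏ j, ((∫⋯∫⁻_((insert i s).erase j), g j ∂μ) x) ^ p := by
          rw [← mul_prod_erase _ _ (mem_univ i)]
          congr 1
          refine prod_congr rfl fun j hj => ?_
          have hij : i ≠ j := (ne_of_mem_erase hj).symm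
          rw [erase_insert_of_ne hij, lmarginal_insert _ (hg j) fun h => hi (mem_of_mem_erase h)]

/-- The multilinear Loomis–Whitney inequality. -/
theorem lintegral_prod_rpow_le_prod_lmarginal {p : ℝ} (hp : 0 ≤ p)
    (hp1 : ((Fintype.card ι : ℝ) - 1) * p = 1)
    {g : ι → (∀ i, X i) → ℝ≥0∞} (hg : ∀ j, Measurable (g j))
    (hg_indep : ∀ j x t, g j (update x j t) = g j x) (x : ∀ i, X i) :
    ∫⁻ y, ∏ j, g j y ^ p ∂Measure.pi μ ≤ ∏ j, ((∫⋯∫⁻_(univ.erase j), g j ∂μ) x) ^ p := by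
  rw [lintegral_eq_lmarginal_univ x]
  exact lmarginal_prod_rpow_le hp hp1 hg hg_indep univ x

theorem lintegral_prod_sum_boxes_rpow_le {p : ℝ} (hp : 0 ≤ p)
    (hp1 : ((Fintype.card ι : ℝ) - 1) * p = 1) {α : ι → Type*} (A : ∀ j, Finset (α j))
    {B : ∀ j, α j → ∀ i, Set (X i)} (hB : ∀ j a i, MeasurableSet (B j a i)) :
    ∫⁻ y, ∏ j, (∑ a ∈ A j, ∏ i ∈ univ.erase j, (B j a i).indicator 1 (y i)) ^ p ∂Measure.pi μ
      ≤ ∏ j, (∑ a ∈ A j, ∏ i ∈ univ.erase j, μ i (B j a i)) ^ p := by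
  have hbox : ∀ j a, Measurable fun y : ∀ i, X i =>
      ∏ i ∈ univ.erase j, (B j a i).indicator (1 : X i → ℝ≥0∞) (y i) :=
    fun j a => Finset.measurable_prod _ fun i _ =>
      (measurable_one.indicator (hB j a i)).comp (measurable_pi_apply i)
  cases isEmpty_or_nonempty (∀ i, X i) with
  | inl h => simp [Measure.eq_zero_of_isEmpty]
  | inr h =>
    obtain ⟨x⟩ := h
    refine (lintegral_prod_rpow_le_prod_lmarginal hp hp1
      (fun j => Finset.measurable_sum _ fun a _ => hbox j a) ?_ x).trans_eq ?_
    · intro j y t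
      refine sum_congr rfl fun a _ => prod_congr rfl fun i hi => ?_
      rw [update_of_ne (ne_of_mem_erase hi)]
    · refine prod_congr rfl fun j _ => ?_
      rw [lmarginal_finsetSum _ (hbox j)]
      simp only [lmarginal_prod_indicator (hB j _)]

end LoomisWhitney

section Cubes

open Set

variable {n : ℕ}

def halfOpenCube (c : EuclideanSpace ℝ (Fin n)) (L : ℝ) : Set (EuclideanSpace ℝ (Fin n)) :=
  {x | ∀ i, x i ∈ Ico (c i) (c i + L)}

theorem halfOpenCube_eq_preimage (c : EuclideanSpace ℝ (Fin n)) (L : ℝ) :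
    halfOpenCube c L = WithLp.ofLp ⁻¹' univ.pi fun i => Ico (c i) (c i + L) := by
  ext x
  simp [halfOpenCube]

theorem measurableSet_halfOpenCube (c : EuclideanSpace ℝ (Fin n)) (L : ℝ) :
    MeasurableSet (halfOpenCube c L) := by
  rw [halfOpenCube_eq_preimage]
  exact (MeasurableSet.univ_pi fun i => measurableSet_Ico).preimage
    (PiLp.volume_preserving_ofLp _).measurable

theorem volume_halfOpenCube (c : EuclideanSpace ℝ (Fin n)) (L : ℝ) :
    volume (halfOpenCube c L) = ENNReal.ofReal L ^ n := by
  rw [halfOpenCube_eq_preimage, (PiLp.volume_preserving_ofLp _).measure_preimage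
    (MeasurableSet.univ_pi fun i => measurableSet_Ico).nullMeasurableSet, volume_pi_pi]
  simp [Real.volume_Ico]

theorem halfOpenCube_subset_cube (c : EuclideanSpace ℝ (Fin n)) (L : ℝ) :
    halfOpenCube c L ⊆ cube c L :=
  fun _ hx i => Ico_subset_Icc_self (hx i)

theorem cube_ae_eq_halfOpenCube (c : EuclideanSpace ℝ (Fin n)) (L : ℝ) :
    cube c L =ᵐ[volume] halfOpenCube c L := by
  have hcube : cube c L = WithLp.ofLp ⁻¹' Icc (WithLp.ofLp c) fun i => c i + L := by
    ext x
    simp [cube, Pi.le_def, forall_and]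
  rw [hcube, halfOpenCube_eq_preimage]
  exact ((PiLp.volume_preserving_ofLp _).quasiMeasurePreserving.preimage_ae_eq
    Measure.univ_pi_Ico_ae_eq_Icc).symm

theorem Ico_eq_iUnion_Ico_add_mul (a : ℝ) {L : ℝ} (hL : 0 < L) (m : ℕ) :
    Ico a (a + m * L) = ⋃ k : Fin m, Ico (a + k * L) (a + k * L + L) := by
  ext x
  simp only [Set.mem_Ico, mem_iUnion]
  constructor
  · rintro ⟨hax, hxm⟩
    have hr : 0 ≤ (x - a) / L := div_nonneg (by linarith) hL.le
    have hlt : ⌊(x - a) / L⌋₊ < m := by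
      rw [Nat.floor_lt hr, div_lt_iff₀ hL]
      linarith
    refine ⟨⟨_, hlt⟩, ?_, ?_⟩
    · have := (le_div_iff₀ hL).1 (Nat.floor_le hr)
      linarith
    · have := (div_lt_iff₀ hL).1 (Nat.lt_floor_add_one ((x - a) / L))
      linarith
  · rintro ⟨k, hk1, hk2⟩
    have hk : (k : ℝ) + 1 ≤ m := by exact_mod_cast k.isLt
    constructor <;> nlinarith [(k : ℕ).cast_nonneg (α := ℝ)]

theorem iUnion_halfOpenCube_grid (c : EuclideanSpace ℝ (Fin n)) {L : ℝ} (hL : 0 < L) (m : ℕ) :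
    ⋃ k : Fin n → Fin m, halfOpenCube (WithLp.toLp 2 fun i => c i + k i * L) L
      = halfOpenCube c (m * L) := by
  simp only [halfOpenCube_eq_preimage, ← preimage_iUnion, Ico_eq_iUnion_Ico_add_mul _ hL]
  exact congrArg _ (iUnion_univ_pi fun i (k : Fin m) => Ico (c i + k * L) (c i + k * L + L))

theorem pairwise_disjoint_halfOpenCube_grid (c : EuclideanSpace ℝ (Fin n)) {L : ℝ} (hL : 0 < L)
    (m : ℕ) :
    Pairwise (Function.onFun Disjoint fun k : Fin n → Fin m =>
      halfOpenCube (WithLp.toLp 2 fun i => c i + k i * L) L) := by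
  intro k k' hkk'
  obtain ⟨i, hi⟩ := Function.ne_iff.1 hkk'
  have hIco : ∀ a b : Fin m, a < b →
      Disjoint (Ico (c i + a * L) (c i + a * L + L)) (Ico (c i + b * L) (c i + b * L + L)) := by
    intro a b hab
    have : (a : ℝ) + 1 ≤ b := by exact_mod_cast hab
    exact Ico_disjoint_Ico.2 (min_le_of_left_le (le_max_of_le_right (by nlinarith)))
  simp only [Function.onFun, halfOpenCube_eq_preimage]
  refine Disjoint.preimage _ (disjoint_univ_pi.2 ⟨i, ?_⟩)
  rcases hi.lt_or_gt with h | h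
  exacts [hIco _ _ h, (hIco _ _ h).symm]

theorem lintegral_cube_eq_sum_halfOpenCube (f : EuclideanSpace ℝ (Fin n) → ℝ≥0∞)
    (c : EuclideanSpace ℝ (Fin n)) {L : ℝ} (hL : 0 < L) (m : ℕ) :
    ∫⁻ x in cube c (m * L), f x
      = ∑ k : Fin n → Fin m,
          ∫⁻ x in halfOpenCube (WithLp.toLp 2 fun i => c i + k i * L) L, f x := by
  rw [setLIntegral_congr (cube_ae_eq_halfOpenCube _ _), ← iUnion_halfOpenCube_grid c hL m,
    lintegral_iUnion (fun _ => measurableSet_halfOpenCube _ _)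
      (pairwise_disjoint_halfOpenCube_grid c hL m), tsum_fintype]

theorem exists_pos_nat_half_le_div_le {ℓ S : ℝ} (hℓ : 0 < ℓ) (hS : ℓ ≤ S) :
    ∃ m : ℕ, 0 < m ∧ ℓ / 2 ≤ S / m ∧ S / m ≤ ℓ := by
  have h1 : 1 ≤ S / ℓ := (one_le_div hℓ).2 hS
  have hm : (0 : ℝ) < ⌈S / ℓ⌉₊ := by
    exact_mod_cast Nat.ceil_pos.2 (by linarith)
  refine ⟨⌈S / ℓ⌉₊, by exact_mod_cast hm, ?_, ?_⟩
  · rw [le_div_iff₀ hm]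
    have := Nat.ceil_lt_add_one (by linarith : 0 ≤ S / ℓ)
    have : S / ℓ * ℓ = S := div_mul_cancel₀ S hℓ.ne'
    nlinarith
  · rw [div_le_iff₀ hm]
    have := Nat.le_ceil (S / ℓ)
    have : S / ℓ * ℓ = S := div_mul_cancel₀ S hℓ.ne'
    nlinarith

theorem dist_le_of_mem_cube {c x y : EuclideanSpace ℝ (Fin n)} {L : ℝ} (hx : x ∈ cube c L)
    (hy : y ∈ cube c L) : dist x y ≤ n * L := by
  have hcoord : ∀ i, dist (x i) (y i) ≤ L := fun i => by
    rw [Real.dist_eq, abs_le]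
    constructor <;> linarith [(hx i).1, (hx i).2, (hy i).1, (hy i).2]
  calc dist x y = √(∑ i, dist (x i) (y i) ^ 2) := EuclideanSpace.dist_eq x y
    _ ≤ ∑ i, dist (x i) (y i) := (Real.sqrt_le_left (sum_nonneg fun _ _ => dist_nonneg)).2
          (sum_sq_le_sq_sum_of_nonneg fun _ _ => dist_nonneg)
    _ ≤ ∑ _i : Fin n, L := sum_le_sum fun i _ => hcoord i
    _ = n * L := by simp

end Cubes

section Tubes

variable {n : ℕ}

theorem half_le_apply_and_abs_apply_le_of_angle_le {v : EuclideanSpace ℝ (Fin n)} {j : Fin n}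
    {δ : ℝ} (hv : ‖v‖ = 1) (hδ : δ ≤ 1 / 2)
    (hangle : InnerProductGeometry.angle v (EuclideanSpace.single j 1) ≤ δ) :
    1 / 2 ≤ v j ∧ ∀ i ≠ j, |v i| ≤ δ := by
  have hcos : Real.cos δ ≤ v j := by
    have h := InnerProductGeometry.cos_angle v (EuclideanSpace.single j 1)
    simp [EuclideanSpace.inner_single_right, hv] at h
    rw [← h]
    exact Real.cos_le_cos_of_nonneg_of_le_pi (InnerProductGeometry.angle_nonneg _ _)
      (by linarith [Real.pi_gt_three]) hangle
  have hvj : 1 - δ ^ 2 / 2 ≤ v j := Real.one_sub_sq_div_two_le_cos.trans hcos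
  have hδ0 : 0 ≤ δ := (InnerProductGeometry.angle_nonneg _ _).trans hangle
  refine ⟨by nlinarith, fun i hij => abs_le_of_sq_le_sq ?_ hδ0⟩
  have hsum : v i ^ 2 + v j ^ 2 ≤ 1 := by
    have h := EuclideanSpace.norm_sq_eq v
    rw [hv, one_pow] at h
    simp only [h, Real.norm_eq_abs, sq_abs]
    rw [← sum_pair hij (f := fun k => v k ^ 2)]
    exact sum_le_sum_of_subset_of_nonneg (subset_univ _) fun _ _ _ => sq_nonneg _
  have hvj1 : v j ≤ 1 := by nlinarith
  nlinarith

theorem tubeFn_eq_one {A : Set (EuclideanSpace ℝ (Fin n))} {W : ℝ} {x : EuclideanSpace ℝ (Fin n)}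
    (h : Metric.infDist x A ≤ W) : tubeFn A W x = 1 :=
  Set.indicator_of_mem (s := {y | Metric.infDist y A ≤ W}) h 1

theorem tubeFn_eq_zero {A : Set (EuclideanSpace ℝ (Fin n))} {W : ℝ} {x : EuclideanSpace ℝ (Fin n)}
    (h : ¬Metric.infDist x A ≤ W) : tubeFn A W x = 0 :=
  Set.indicator_of_notMem (s := {y | Metric.infDist y A ≤ W}) h 1

/-- `p + ((c j - p j) / v j) • v` is the point where the line crosses the hyperplane
`x_j = c_j`. -/
theorem abs_sub_le_of_infDist_line_le {p v c x : EuclideanSpace ℝ (Fin n)} {j : Fin n}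
    {δ W L : ℝ} (hvj : 1 / 2 ≤ v j) (hvi : ∀ i ≠ j, |v i| ≤ δ) (hδ : δ ≤ 1 / 2) (hW : 0 < W)
    (hδL : δ * L ≤ W) (hx : x ∈ cube c L) (hdist : Metric.infDist x (line p v) ≤ W)
    {i : Fin n} (hij : i ≠ j) :
    |x i - (p + ((c j - p j) / v j) • v) i| ≤ 6 * W := by
  have hne : (line p v).Nonempty := ⟨p, 0, by simp⟩
  obtain ⟨_, ⟨t, rfl⟩, hxy⟩ :=
    (Metric.infDist_lt_iff hne).1 (hdist.trans_lt (by linarith : W < 2 * W))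
  set t₀ := (c j - p j) / v j
  have hnear : ∀ k, |x k - (p k + t * v k)| ≤ 2 * W := fun k => by
    have := (PiLp.dist_apply_le x (p + t • v) k).trans hxy.le
    simpa [Real.dist_eq] using this
  have hL : 0 ≤ L := by linarith [(hx j).1, (hx j).2]
  have ht : |t - t₀| ≤ 2 * (2 * W + L) := by
    have hx' := hx j
    have hv0 : (v j)⁻¹ ≤ 2 := by rw [inv_le_comm₀ (by linarith) two_pos]; linarith
    have hid : t - t₀ = ((p j + t * v j) - x j + (x j - c j)) / v j := by
      simp only [t₀]
      field_simp
      ring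
    have hsum : |p j + t * v j - x j + (x j - c j)| ≤ 2 * W + L := by
      have h1 : |p j + t * v j - x j| ≤ 2 * W := by rw [abs_sub_comm]; exact hnear j
      have h2 : |x j - c j| ≤ L := abs_le.2 ⟨by linarith [hx'.1], by linarith [hx'.2]⟩
      exact (abs_add_le _ _).trans (by linarith)
    rw [hid, abs_div, abs_of_pos (by linarith : 0 < v j), div_eq_mul_inv]
    calc |p j + t * v j - x j + (x j - c j)| * (v j)⁻¹ ≤ (2 * W + L) * 2 := by gcongr
      _ = 2 * (2 * W + L) := by ring
  have hδ0 : 0 ≤ δ := (abs_nonneg _).trans (hvi i hij)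
  calc |x i - (p + t₀ • v) i| = |(x i - (p i + t * v i)) + (t - t₀) * v i| := by
        simp only [PiLp.add_apply, PiLp.smul_apply, smul_eq_mul]
        ring_nf
    _ ≤ 2 * W + 2 * (2 * W + L) * δ := (abs_add_le _ _).trans (add_le_add (hnear i)
          (by rw [abs_mul]; exact mul_le_mul ht (hvi i hij) (abs_nonneg _) (by positivity)))
    _ ≤ 6 * W := by nlinarith

theorem tubeFn_line_le_prod_indicator {p v c x : EuclideanSpace ℝ (Fin n)} {j : Fin n}
    {δ W L : ℝ} (hvj : 1 / 2 ≤ v j) (hvi : ∀ i ≠ j, |v i| ≤ δ) (hδ : δ ≤ 1 / 2) (hW : 0 < W)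
    (hδL : δ * L ≤ W) (hx : x ∈ cube c L) :
    tubeFn (line p v) W x ≤ ∏ i ∈ univ.erase j,
      (Set.Icc ((p + ((c j - p j) / v j) • v) i - 6 * W)
        ((p + ((c j - p j) / v j) • v) i + 6 * W)).indicator 1 (x i) := by
  by_cases hdist : Metric.infDist x (line p v) ≤ W
  · refine (tubeFn_eq_one hdist).trans_le (prod_eq_one fun i hi => ?_).ge
    have := abs_le.1 (abs_sub_le_of_infDist_line_le hvj hvi hδ hW hδL hx hdist
      (ne_of_mem_erase hi))
    exact Set.indicator_of_mem (Set.mem_Icc.2 ⟨by linarith [this.2], by linarith [this.1]⟩) _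
  · rw [tubeFn_eq_zero hdist]
    exact zero_le

open Classical in
def meetingTubes {ι : Type*} [Fintype ι] (P : Set (EuclideanSpace ℝ (Fin n)))
    (A : ι → Set (EuclideanSpace ℝ (Fin n))) (W : ℝ) : Finset ι :=
  {a | ∃ x ∈ P, Metric.infDist x (A a) ≤ W}

section MeetingTubes

variable {ι : Type*} [Fintype ι] {P : Set (EuclideanSpace ℝ (Fin n))}
  {A : ι → Set (EuclideanSpace ℝ (Fin n))} {W : ℝ} {x : EuclideanSpace ℝ (Fin n)}

theorem mem_meetingTubes {a : ι} :
    a ∈ meetingTubes P A W ↔ ∃ x ∈ P, Metric.infDist x (A a) ≤ W := by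
  simp [meetingTubes]

theorem sum_tubeFn_eq_sum_meetingTubes (hx : x ∈ P) :
    ∑ a, tubeFn (A a) W x = ∑ a ∈ meetingTubes P A W, tubeFn (A a) W x :=
  (sum_subset (subset_univ _) fun _ _ ha =>
    tubeFn_eq_zero fun h => ha (mem_meetingTubes.2 ⟨x, hx, h⟩)).symm

theorem card_meetingTubes_le_sum_tubeFn {W' : ℝ} (hP : ∀ y ∈ P, W + dist x y ≤ W') :
    (#(meetingTubes P A W) : ℝ≥0∞) ≤ ∑ a, tubeFn (A a) W' x := by
  calc (#(meetingTubes P A W) : ℝ≥0∞) = ∑ a ∈ meetingTubes P A W, tubeFn (A a) W' x := by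
        rw [card_eq_sum_ones, Nat.cast_sum, Nat.cast_one]
        refine sum_congr rfl fun a ha => (tubeFn_eq_one ?_).symm
        obtain ⟨y, hy, hya⟩ := mem_meetingTubes.1 ha
        linarith [Metric.infDist_le_infDist_add_dist (s := A a) (x := x) (y := y), hP y hy,
          dist_comm x y]
    _ ≤ ∑ a, tubeFn (A a) W' x := sum_le_sum_of_subset (subset_univ _)

end MeetingTubes

end Tubes

section ScaleStep

variable {n : ℕ}

theorem one_div_natCast_sub_one_nonneg (hn : 1 ≤ n) : (0 : ℝ) ≤ 1 / ((n : ℝ) - 1) :=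
  one_div_nonneg.2 (sub_nonneg.2 (by exact_mod_cast hn))

theorem lintegral_prod_sum_slab_rpow_le (hn : 2 ≤ n) {α : Fin n → Type*} (A : ∀ j, Finset (α j))
    (w : ∀ j, α j → EuclideanSpace ℝ (Fin n)) {r : ℝ} :
    ∫⁻ x : EuclideanSpace ℝ (Fin n), ∏ j, (∑ a ∈ A j, ∏ i ∈ univ.erase j,
        (Set.Icc (w j a i - r) (w j a i + r)).indicator 1 (x i)) ^ ((1 : ℝ) / ((n : ℝ) - 1))
      ≤ ENNReal.ofReal (2 * r) ^ n * ∏ j, (#(A j) : ℝ≥0∞) ^ ((1 : ℝ) / ((n : ℝ) - 1)) := by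
  set q : ℝ := 1 / ((n : ℝ) - 1)
  have hq : 0 ≤ q := one_div_natCast_sub_one_nonneg (by omega)
  have hq1 : ((Fintype.card (Fin n) : ℝ) - 1) * q = 1 := by
    have hn' : (2 : ℝ) ≤ n := by exact_mod_cast hn
    rw [Fintype.card_fin]
    exact mul_one_div_cancel (by linarith)
  have hpow : ∀ j, (#(A j) * ENNReal.ofReal (2 * r) ^ (n - 1)) ^ q
      = (#(A j) : ℝ≥0∞) ^ q * ENNReal.ofReal (2 * r) := fun j => by
    rw [ENNReal.mul_rpow_of_nonneg _ _ hq, ← ENNReal.rpow_natCast, ← ENNReal.rpow_mul,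
      Nat.cast_pred (by omega), ← Fintype.card_fin n, hq1, ENNReal.rpow_one]
  let G : (Fin n → ℝ) → ℝ≥0∞ := fun y => ∏ j, (∑ a ∈ A j, ∏ i ∈ univ.erase j,
    (Set.Icc (w j a i - r) (w j a i + r)).indicator 1 (y i)) ^ q
  change ∫⁻ x, G (WithLp.ofLp x) ≤ _
  rw [(PiLp.volume_preserving_ofLp (Fin n)).lintegral_comp_emb
    (MeasurableEquiv.toLp 2 (Fin n → ℝ)).symm.measurableEmbedding, volume_pi]
  refine (lintegral_prod_sum_boxes_rpow_le hq hq1 A fun j a i => measurableSet_Icc).trans_eq ?_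
  have hbox : ∀ j (a : α j), ∏ i ∈ univ.erase j, volume (Set.Icc (w j a i - r) (w j a i + r))
      = ENNReal.ofReal (2 * r) ^ (n - 1) := fun j a => by
    rw [prod_congr rfl fun i _ => by rw [Real.volume_Icc, add_sub_sub_cancel, ← two_mul],
      prod_const, card_erase_of_mem (mem_univ j), card_univ, Fintype.card_fin]
  simp only [hbox, sum_const, nsmul_eq_mul, hpow, prod_mul_distrib, prod_const, card_univ,
    Fintype.card_fin]
  ring

variable {N : Fin n → ℕ} {p v : (j : Fin n) → Fin (N j) → EuclideanSpace ℝ (Fin n)}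

/-- The integrand `∏_j f_{j,W}^{1/(n-1)}`. -/
def tubeProduct (N : Fin n → ℕ) (p v : (j : Fin n) → Fin (N j) → EuclideanSpace ℝ (Fin n))
    (W : ℝ) (x : EuclideanSpace ℝ (Fin n)) : ℝ≥0∞ :=
  ∏ j, (∑ a : Fin (N j), tubeFn (line (p j a) (v j a)) W x) ^ ((1 : ℝ) / ((n : ℝ) - 1))

theorem setLIntegral_tubeProduct_le (hn : 2 ≤ n) {δ W L : ℝ} (hδ : δ ≤ 1 / 2) (hW : 0 < W)
    (hδL : δ * L ≤ W) (hv : ∀ j a, ‖v j a‖ = 1)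
    (hangle : ∀ j a, InnerProductGeometry.angle (v j a) (EuclideanSpace.single j 1) ≤ δ)
    (c : EuclideanSpace ℝ (Fin n)) :
    ∫⁻ x in halfOpenCube c L, tubeProduct N p v W x
      ≤ ENNReal.ofReal (12 * W) ^ n * ∏ j, (#(meetingTubes (halfOpenCube c L)
          (fun a => line (p j a) (v j a)) W) : ℝ≥0∞) ^ ((1 : ℝ) / ((n : ℝ) - 1)) := by
  have hq := one_div_natCast_sub_one_nonneg (by omega : 1 ≤ n)
  have hdir := fun j a => half_le_apply_and_abs_apply_le_of_angle_le (hv j a) hδ (hangle j a)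
  calc ∫⁻ x in halfOpenCube c L, tubeProduct N p v W x
      ≤ ∫⁻ x in halfOpenCube c L, ∏ j, (∑ a ∈ meetingTubes (halfOpenCube c L)
          (fun a => line (p j a) (v j a)) W, ∏ i ∈ univ.erase j,
          (Set.Icc ((p j a + ((c j - p j a j) / v j a j) • v j a) i - 6 * W)
            ((p j a + ((c j - p j a j) / v j a j) • v j a) i + 6 * W)).indicator 1 (x i))
          ^ ((1 : ℝ) / ((n : ℝ) - 1)) := by
        refine setLIntegral_mono' (measurableSet_halfOpenCube _ _) fun x hx =>
          prod_le_prod' fun j _ => ENNReal.rpow_le_rpow ?_ hq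
        rw [sum_tubeFn_eq_sum_meetingTubes hx]
        exact sum_le_sum fun a _ => tubeFn_line_le_prod_indicator (hdir j a).1 (hdir j a).2 hδ hW
          hδL (halfOpenCube_subset_cube _ _ hx)
    _ ≤ _ := setLIntegral_le_lintegral _ _
    _ ≤ _ := lintegral_prod_sum_slab_rpow_le hn _ _
    _ = _ := by ring_nf

theorem ofReal_pow_mul_le_setLIntegral_tubeProduct (hn : 1 ≤ n) {W W' L : ℝ}
    (hW' : W + n * L ≤ W') (c : EuclideanSpace ℝ (Fin n)) :
    ENNReal.ofReal L ^ n * ∏ j, (#(meetingTubes (halfOpenCube c L)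
        (fun a => line (p j a) (v j a)) W) : ℝ≥0∞) ^ ((1 : ℝ) / ((n : ℝ) - 1))
      ≤ ∫⁻ x in halfOpenCube c L, tubeProduct N p v W' x := by
  have hq := one_div_natCast_sub_one_nonneg hn
  rw [← volume_halfOpenCube c L, mul_comm, ← setLIntegral_const]
  refine setLIntegral_mono' (measurableSet_halfOpenCube _ _) fun x hx =>
    prod_le_prod' fun j _ =>
      ENNReal.rpow_le_rpow (card_meetingTubes_le_sum_tubeFn fun y hy => ?_) hq
  linarith [dist_le_of_mem_cube (halfOpenCube_subset_cube _ _ hx)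
    (halfOpenCube_subset_cube _ _ hy)]

theorem setLIntegral_tubeProduct_le_mul (hn : 2 ≤ n) {δ W W' L : ℝ} (hδ : δ ≤ 1 / 2)
    (hW : 0 < W) (hL : 0 < L) (hδL : δ * L ≤ W) (hW' : W + n * L ≤ W')
    (hv : ∀ j a, ‖v j a‖ = 1)
    (hangle : ∀ j a, InnerProductGeometry.angle (v j a) (EuclideanSpace.single j 1) ≤ δ)
    (c : EuclideanSpace ℝ (Fin n)) :
    ∫⁻ x in halfOpenCube c L, tubeProduct N p v W x
      ≤ ENNReal.ofReal ((12 * W / L) ^ n) * ∫⁻ x in halfOpenCube c L, tubeProduct N p v W' x := by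
  have hsplit : ENNReal.ofReal (12 * W) ^ n
      = ENNReal.ofReal ((12 * W / L) ^ n) * ENNReal.ofReal L ^ n := by
    rw [← ENNReal.ofReal_pow hL.le, ← ENNReal.ofReal_pow (by positivity),
      ← ENNReal.ofReal_mul (by positivity), ← mul_pow, div_mul_cancel₀ _ hL.ne']
  calc ∫⁻ x in halfOpenCube c L, tubeProduct N p v W x
      ≤ _ := setLIntegral_tubeProduct_le hn hδ hW hδL hv hangle c
    _ = _ := by rw [hsplit, mul_assoc]
    _ ≤ _ := by gcongr; exact ofReal_pow_mul_le_setLIntegral_tubeProduct (by omega) hW' c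

theorem exists_grid_side_bounds (hn : 2 ≤ n) {δ W S : ℝ} (hδ : 0 < δ) (hδ2 : δ ≤ 1 / 2)
    (hW : 0 < W) (hS : δ⁻¹ * W ≤ S) :
    ∃ m : ℕ, 0 < m ∧ δ * (S / m) ≤ W ∧ W + n * (S / m) ≤ δ⁻¹ * W ∧
      12 * W / (S / m) ≤ 48 * n * δ := by
  have hn2 : (2 : ℝ) ≤ n := by exact_mod_cast hn
  have hδinv : 2 ≤ δ⁻¹ := by rw [le_inv_comm₀ two_pos hδ]; linarith
  obtain ⟨m, hm, hLlo, hLhi⟩ := exists_pos_nat_half_le_div_le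
    (by positivity : 0 < δ⁻¹ * W / (2 * n)) ((div_le_self (by positivity) (by linarith)).trans hS)
  have hL : 0 < S / m := (by positivity : 0 < δ⁻¹ * W / (2 * n) / 2).trans_le hLlo
  refine ⟨m, hm, ?_, ?_, ?_⟩
  · calc δ * (S / m) ≤ δ * (δ⁻¹ * W / (2 * n)) := by gcongr
      _ = W / (2 * n) := by field_simp
      _ ≤ W := div_le_self hW.le (by linarith)
  · calc W + n * (S / m) ≤ W + n * (δ⁻¹ * W / (2 * n)) := by gcongr
      _ = W + δ⁻¹ * W / 2 := by field_simp
      _ ≤ δ⁻¹ * W := by nlinarith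
  · have h1 : δ⁻¹ * W ≤ 4 * n * (S / m) := by
      rw [div_div, div_le_iff₀ (by positivity)] at hLlo
      linarith
    have h2 : W ≤ 4 * n * δ * (S / m) := calc
      W = δ * (δ⁻¹ * W) := by field_simp
      _ ≤ δ * (4 * n * (S / m)) := by gcongr
      _ = 4 * n * δ * (S / m) := by ring
    rw [div_le_iff₀ hL]
    linarith

end ScaleStep

/-- Main scale-step lemma: there is `C_n` such that for `0 < δ ≤ 1/2`, `W > 0`, lines making
angle at most `δ` with the corresponding axes, and any cube of side `S ≥ δ⁻¹ W`,
`∫_{Q_S} ∏_j f_{j,W}^{1/(n-1)} ≤ C_n δⁿ ∫_{Q_S} ∏_j f_{j,δ⁻¹W}^{1/(n-1)}`. -/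
theorem scale_step (n : ℕ) (hn : 2 ≤ n) :
    ∃ C : ℝ, 0 < C ∧
      ∀ (δ W : ℝ), 0 < δ → δ ≤ 1 / 2 → 0 < W →
      ∀ (N : Fin n → ℕ) (p v : (j : Fin n) → Fin (N j) → EuclideanSpace ℝ (Fin n)),
        (∀ j a, ‖v j a‖ = 1) →
        (∀ j a, InnerProductGeometry.angle (v j a) (EuclideanSpace.single j 1) ≤ δ) →
        ∀ S : ℝ, δ⁻¹ * W ≤ S → ∀ c : EuclideanSpace ℝ (Fin n),
          ∫⁻ x in cube c S,
              ∏ j : Fin n, (∑ a : Fin (N j),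
                tubeFn (line (p j a) (v j a)) W x) ^ ((1 : ℝ) / ((n : ℝ) - 1))
            ≤ ENNReal.ofReal (C * δ ^ n) *
                ∫⁻ x in cube c S,
                  ∏ j : Fin n, (∑ a : Fin (N j),
                    tubeFn (line (p j a) (v j a)) (δ⁻¹ * W) x) ^ ((1 : ℝ) / ((n : ℝ) - 1)) := by
  refine ⟨(48 * n) ^ n, by positivity, fun δ W hδ hδ2 hW N p v hv hangle S hS c => ?_⟩
  obtain ⟨m, hm, hδL, hW', hC⟩ := exists_grid_side_bounds hn hδ hδ2 hW hS
  set L := S / m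
  have hL : 0 < L := div_pos ((by positivity : 0 < δ⁻¹ * W).trans_le hS) (by exact_mod_cast hm)
  have hSL : S = m * L := by simp only [L]; field_simp
  rw [hSL, lintegral_cube_eq_sum_halfOpenCube _ c hL m,
    lintegral_cube_eq_sum_halfOpenCube _ c hL m, mul_sum]
  refine sum_le_sum fun k _ =>
    (setLIntegral_tubeProduct_le_mul hn hδ2 hW hL hδL hW' hv hangle _).trans ?_
  gcongr ?_ * _
  rw [← mul_pow]
  exact ENNReal.ofReal_le_ofReal <| pow_le_pow_left₀ (by positivity) hC n
end
end
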